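/- arXiv:1905.05027 — 4 statements merged into one kernel-verified Lean document; each statement's English description precedes it below -/
import Mathlib

section
/- Let F satisfy Assumption 2, let a > 0 and b ∈ ℝ, and set b₊ = max(b, 0). If y₁, y₂ : [0,∞) → ℝ are differentiable functions satisfying yᵢ'(x) = −a·x² + b + F(yᵢ(x)) for all x ≥ 0 and yᵢ(x) ≥ 0 for every x ≥ √(b₊/a) (i = 1, 2), then y₁ = y₂ on [0,∞). -/
/-- Assumption 2 on the function `F`. -/
structure Assumption2 (F : ℝ → ℝ) : Prop where
  convex : ConvexOn ℝ Set.univ F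
  diff : Differentiable ℝ F
  even : ∀ x : ℝ, F (-x) = F x
  strictMonoOn : StrictMonoOn F (Set.Ici 0)
  map_zero : F 0 = 0
  deriv_diffOn : ∀ x ∈ Set.Ici (0 : ℝ), DifferentiableAt ℝ (deriv F) x
  deriv_strictMonoOn : StrictMonoOn (deriv F) (Set.Ici 0)
  deriv_zero : deriv F 0 = 0
  growth : ∃ K > (0 : ℝ), ∃ p : ℝ, 2 ≤ p ∧ ∀ x : ℝ, F x ≤ K * (1 + |x| ^ p)
  second_deriv_lb : ∃ C > (0 : ℝ), ∃ x₀ > (0 : ℝ), ∀ x : ℝ, x₀ < |x| → C < deriv (deriv F) x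

/-!
If two solutions differ somewhere, uniqueness for the locally Lipschitz equation keeps them
ordered from then on, say `y₂ < y₁`. Where `y₂ ≥ 0`, superadditivity of the convex `F` gives
`w' = F(y₁) - F(y₂) ≥ F(w)` for `w = y₁ - y₂ > 0`. Then `w` grows at least linearly, and once
`w` is large the quadratic lower bound `F(t) ≥ c (t - x₀)²` turns this into a Riccati inequality
`u' ≥ c u²`, whose positive solutions blow up in finite time: impossible on `[0, ∞)`.
-/

open Set

theorem le_of_hasDerivWithinAt_Ici_of_deriv_le {f g f' g' : ℝ → ℝ} {m : ℝ}
    (hf : ∀ x ∈ Ici m, HasDerivWithinAt f (f' x) (Ici m) x)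
    (hg : ∀ x ∈ Ici m, HasDerivWithinAt g (g' x) (Ici m) x)
    (hle : ∀ x ∈ Ioi m, f' x ≤ g' x) (hm : f m ≤ g m) {x : ℝ} (hx : m ≤ x) :
    f x ≤ g x := by
  have hmono : MonotoneOn (fun x => g x - f x) (Ici m) := by
    refine monotoneOn_of_hasDerivWithinAt_nonneg (convex_Ici m)
      (fun x hx => ((hg x hx).sub (hf x hx)).continuousWithinAt) (fun x hx => ?_)
      (fun x hx => sub_nonneg.2 (hle x (interior_Ici (a := m) ▸ hx)))
    rw [interior_Ici] at hx ⊢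
    exact ((hg x (mem_Ici_of_Ioi hx)).sub (hf x (mem_Ici_of_Ioi hx))).mono Ioi_subset_Ici_self
  linarith [hmono self_mem_Ici hx hx]

theorem false_of_mul_sq_le_deriv {u u' : ℝ → ℝ} {m c : ℝ} (hc : 0 < c)
    (hu : ∀ x ∈ Ici m, HasDerivWithinAt u (u' x) (Ici m) x) (hpos : ∀ x ∈ Ici m, 0 < u x)
    (hle : ∀ x ∈ Ioi m, c * u x ^ 2 ≤ u' x) : False := by
  have hum := hpos m self_mem_Ici
  set x := m + (c * u m)⁻¹
  have hx : m ≤ x := le_add_of_nonneg_right (by positivity)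
  -- `1 / u + c x` is antitone, yet `1 / u` cannot drop by `1 / u m` while staying positive.
  have hanti : (u x)⁻¹ + c * x ≤ (u m)⁻¹ + c * m :=
    le_of_hasDerivWithinAt_Ici_of_deriv_le (g' := fun _ => 0)
      (fun y hy => ((hu y hy).inv (hpos y hy).ne').add ((hasDerivWithinAt_id y _).const_mul c))
      (fun y _ => hasDerivWithinAt_const y _ _)
      (fun y hy => by
        have := hpos y (mem_Ici_of_Ioi hy)
        have : c ≤ u' y / u y ^ 2 := (le_div_iff₀ (by positivity)).2 (hle y hy)
        simp only [mul_one, neg_div]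
        linarith)
      le_rfl hx
  have hcx : c * x = c * m + (u m)⁻¹ := by
    simp only [x]
    field_simp
  have : 0 < (u x)⁻¹ := inv_pos.2 (hpos x hx)
  linarith

theorem ConvexOn.add_le_map_add {f : ℝ → ℝ} (hf : ConvexOn ℝ (Ici 0) f) (h0 : f 0 ≤ 0)
    {s t : ℝ} (hs : 0 ≤ s) (ht : 0 ≤ t) : f s + f t ≤ f (s + t) := by
  rcases (add_nonneg hs ht).eq_or_lt with hst | hst
  · obtain ⟨rfl, rfl⟩ : s = 0 ∧ t = 0 := ⟨by linarith, by linarith⟩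
    simpa using h0
  have hchord : ∀ r, 0 ≤ r → r ≤ s + t → f r ≤ r / (s + t) * f (s + t) := fun r hr hrst => by
    have ha : 0 ≤ 1 - r / (s + t) := by rw [sub_nonneg, div_le_one hst]; exact hrst
    have hb : 0 ≤ r / (s + t) := by positivity
    have := hf.2 self_mem_Ici (mem_Ici.2 (add_nonneg hs ht)) ha hb (by ring)
    simp only [smul_eq_mul, mul_zero, zero_add, div_mul_cancel₀ r hst.ne'] at this
    nlinarith [(div_le_one hst).2 hrst]
  calc f s + f t ≤ s / (s + t) * f (s + t) + t / (s + t) * f (s + t) :=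
        add_le_add (hchord s hs (by linarith)) (hchord t ht (by linarith))
    _ = f (s + t) := by field_simp

section Solutions

variable {g F y₁ y₂ : ℝ → ℝ}

theorem LocallyLipschitz.eqOn_Icc_of_solutions_eq (hF : LocallyLipschitz F)
    (h₁ : ∀ x, 0 ≤ x → HasDerivWithinAt y₁ (g x + F (y₁ x)) (Ici 0) x)
    (h₂ : ∀ x, 0 ≤ x → HasDerivWithinAt y₂ (g x + F (y₂ x)) (Ici 0) x)
    {x c : ℝ} (hx : 0 ≤ x) (hc : y₁ c = y₂ c) : EqOn y₁ y₂ (Icc x c) := by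
  have hIcc : Icc x c ⊆ Ici 0 := fun t ht => hx.trans ht.1
  have hcont₁ : ContinuousOn y₁ (Icc x c) :=
    fun t ht => (h₁ t (hIcc ht)).continuousWithinAt.mono hIcc
  have hcont₂ : ContinuousOn y₂ (Icc x c) :=
    fun t ht => (h₂ t (hIcc ht)).continuousWithinAt.mono hIcc
  -- Both solutions stay in a compact set, on which `F` is Lipschitz.
  set s := y₁ '' Icc x c ∪ y₂ '' Icc x c
  obtain ⟨K, hK⟩ := hF.locallyLipschitzOn.exists_lipschitzOnWith_of_compact
    ((isCompact_Icc.image_of_continuousOn hcont₁).union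
      (isCompact_Icc.image_of_continuousOn hcont₂))
  have hv : ∀ t ∈ Ioc x c, LipschitzOnWith K (fun y => g t + F y) s :=
    fun t _ a ha b hb => by simpa only [edist_add_left] using hK ha hb
  have hderiv : ∀ {y : ℝ → ℝ}, (∀ t, 0 ≤ t → HasDerivWithinAt y (g t + F (y t)) (Ici 0) t) →
      ∀ t ∈ Ioc x c, HasDerivWithinAt y (g t + F (y t)) (Iic t) t := fun hy t ht =>
    ((hy t (hx.trans ht.1.le)).hasDerivAt (Ici_mem_nhds (hx.trans_lt ht.1))).hasDerivWithinAt
  exact ODE_solution_unique_of_mem_Icc_left (v := fun t y => g t + F y) (s := fun _ => s) hv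
    hcont₁ (hderiv h₁) (fun t ht => Or.inl (mem_image_of_mem _ (Ioc_subset_Icc_self ht)))
    hcont₂ (hderiv h₂) (fun t ht => Or.inr (mem_image_of_mem _ (Ioc_subset_Icc_self ht))) hc

theorem LocallyLipschitz.solution_lt_of_lt (hF : LocallyLipschitz F)
    (h₁ : ∀ x, 0 ≤ x → HasDerivWithinAt y₁ (g x + F (y₁ x)) (Ici 0) x)
    (h₂ : ∀ x, 0 ≤ x → HasDerivWithinAt y₂ (g x + F (y₂ x)) (Ici 0) x)
    {x t : ℝ} (hx : 0 ≤ x) (hlt : y₂ x < y₁ x) (ht : x ≤ t) : y₂ t < y₁ t := by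
  by_contra! hle
  have hIcc : Icc x t ⊆ Ici 0 := fun s hs => hx.trans hs.1
  obtain ⟨c, hc, hyc⟩ := isPreconnected_Icc.intermediate_value₂ (left_mem_Icc.2 ht)
    (right_mem_Icc.2 ht) (fun s hs => (h₂ s (hIcc hs)).continuousWithinAt.mono hIcc)
    (fun s hs => (h₁ s (hIcc hs)).continuousWithinAt.mono hIcc) hlt.le hle
  exact hlt.ne' (hF.eqOn_Icc_of_solutions_eq h₁ h₂ hx hyc.symm ⟨le_rfl, hc.1⟩)

end Solutions

namespace Assumption2

variable {F : ℝ → ℝ}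

theorem locallyLipschitz (hF : Assumption2 F) : LocallyLipschitz F :=
  locallyLipschitzOn_univ.1 (hF.convex.locallyLipschitzOn isOpen_univ)

theorem pos (hF : Assumption2 F) {t : ℝ} (ht : 0 < t) : 0 < F t :=
  hF.map_zero ▸ hF.strictMonoOn self_mem_Ici ht.le ht

theorem exists_mul_sq_le (hF : Assumption2 F) :
    ∃ c > (0 : ℝ), ∃ x₀ ≥ (0 : ℝ), ∀ t, x₀ ≤ t → c * (t - x₀) ^ 2 ≤ F t := by
  obtain ⟨C, hC, x₀, hx₀, hF''⟩ := hF.second_deriv_lb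
  have hF' : ∀ t, x₀ ≤ t → C * (t - x₀) ≤ deriv F t := fun t ht =>
    le_of_hasDerivWithinAt_Ici_of_deriv_le (f' := fun _ => C * 1) (g' := deriv (deriv F))
      (fun y _ => (((hasDerivAt_id y).sub_const x₀).const_mul C).hasDerivWithinAt)
      (fun y hy => (hF.deriv_diffOn y (hx₀.le.trans hy)).hasDerivAt.hasDerivWithinAt)
      (fun y hy => by simpa using (hF'' y (by rwa [abs_of_pos (hx₀.trans hy)])).le)
      (by simpa [hF.deriv_zero] using
        hF.deriv_strictMonoOn.monotoneOn self_mem_Ici (mem_Ici.2 hx₀.le) hx₀.le)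
      ht
  refine ⟨C / 2, by positivity, x₀, hx₀.le, fun t ht => ?_⟩
  refine le_of_hasDerivWithinAt_Ici_of_deriv_le (f := fun y => C / 2 * (y - x₀) ^ 2)
    (f' := fun y => C * (y - x₀)) (g' := deriv F)
    (fun y _ => ?_) (fun y _ => (hF.diff y).hasDerivAt.hasDerivWithinAt)
    (fun y hy => hF' y (mem_Ici_of_Ioi hy)) (by simpa using (hF.pos hx₀).le) ht
  have hsq := (((hasDerivAt_id y).sub_const x₀).pow 2).const_mul (C / 2)
  refine (hsq.congr_deriv ?_).hasDerivWithinAt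
  simp only [id, Nat.cast_ofNat]
  ring

theorem false_of_pos_of_map_le_deriv (hF : Assumption2 F) {w w' : ℝ → ℝ} {m : ℝ}
    (hw : ∀ x ∈ Ici m, HasDerivWithinAt w (w' x) (Ici m) x) (hpos : ∀ x ∈ Ici m, 0 < w x)
    (hle : ∀ x ∈ Ioi m, F (w x) ≤ w' x) : False := by
  obtain ⟨c, hc, x₀, hx₀, hquad⟩ := hF.exists_mul_sq_le
  have hδ : 0 < w m := hpos m self_mem_Ici
  have hw_ge : ∀ x ∈ Ici m, w m ≤ w x := fun x hx =>
    le_of_hasDerivWithinAt_Ici_of_deriv_le (f' := fun _ => 0)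
      (fun y _ => hasDerivWithinAt_const y _ _) hw
      (fun y hy => (hF.pos (hpos y (mem_Ici_of_Ioi hy))).le.trans (hle y hy)) le_rfl hx
  set ε := F (w m)
  have hε : 0 < ε := hF.pos hδ
  have hlin : ∀ x ∈ Ici m, w m + ε * (x - m) ≤ w x := fun x hx =>
    le_of_hasDerivWithinAt_Ici_of_deriv_le (f' := fun _ => ε * 1)
      (fun y _ => (((hasDerivAt_id y).sub_const m).const_mul ε).const_add _ |>.hasDerivWithinAt)
      hw
      (fun y hy => by
        simpa using (hF.strictMonoOn.monotoneOn (mem_Ici.2 hδ.le)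
          (mem_Ici.2 (hpos y (mem_Ici_of_Ioi hy)).le) (hw_ge y (mem_Ici_of_Ioi hy))).trans
          (hle y hy))
      (by simp) hx
  set m' := m + x₀ / ε
  have hmm' : m ≤ m' := le_add_of_nonneg_right (by positivity)
  have hlarge : ∀ x ∈ Ici m', x₀ < w x := fun x hx => by
    have := hlin x (hmm'.trans hx)
    have : x₀ ≤ ε * (x - m) := by
      rw [← div_le_iff₀' hε]
      simp only [m', mem_Ici] at hx
      linarith
    linarith
  exact false_of_mul_sq_le_deriv hc (u := fun x => w x - x₀)
    (fun x hx => ((hw x (hmm'.trans hx)).mono (Ici_subset_Ici.2 hmm')).sub_const x₀)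
    (fun x hx => sub_pos.2 (hlarge x hx))
    (fun x hx => (hquad _ (hlarge x (mem_Ici_of_Ioi hx)).le).trans
      (hle x (hmm'.trans_lt hx)))

theorem not_lt_of_solutions (hF : Assumption2 F) {g y₁ y₂ : ℝ → ℝ} {x₁ : ℝ}
    (h₁ : ∀ x, 0 ≤ x → HasDerivWithinAt y₁ (g x + F (y₁ x)) (Ici 0) x)
    (h₂ : ∀ x, 0 ≤ x → HasDerivWithinAt y₂ (g x + F (y₂ x)) (Ici 0) x)
    (h₂pos : ∀ x, x₁ ≤ x → 0 ≤ y₂ x) {x : ℝ} (hx : 0 ≤ x) : ¬ y₂ x < y₁ x := by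
  intro hlt
  set m := max x x₁
  have hIci : Ici m ⊆ Ici 0 := Ici_subset_Ici.2 (hx.trans (le_max_left _ _))
  have hgt : ∀ t ∈ Ici m, y₂ t < y₁ t := fun t ht =>
    hF.locallyLipschitz.solution_lt_of_lt h₁ h₂ hx hlt ((le_max_left _ _).trans ht)
  refine hF.false_of_pos_of_map_le_deriv (w := fun t => y₁ t - y₂ t)
    (w' := fun t => F (y₁ t) - F (y₂ t)) (m := m)
    (fun t ht => (((h₁ t (hIci ht)).sub (h₂ t (hIci ht))).congr_deriv (by ring)).mono hIci)
    (fun t ht => sub_pos.2 (hgt t ht)) (fun t ht => ?_)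
  have hy₂ : 0 ≤ y₂ t := h₂pos t ((le_max_right _ _).trans (mem_Ici_of_Ioi ht))
  have := (hF.convex.subset (subset_univ _) (convex_Ici 0)).add_le_map_add
    hF.map_zero.le hy₂ (sub_pos.2 (hgt t (mem_Ici_of_Ioi ht))).le
  rw [add_sub_cancel] at this
  linarith

end Assumption2

theorem stmt9_general (F : ℝ → ℝ) (hF : Assumption2 F) (a b : ℝ)
    (y₁ y₂ : ℝ → ℝ)
    (h₁ : ∀ x : ℝ, 0 ≤ x →
      HasDerivWithinAt y₁ (-a * x ^ 2 + b + F (y₁ x)) (Set.Ici 0) x)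
    (h₂ : ∀ x : ℝ, 0 ≤ x →
      HasDerivWithinAt y₂ (-a * x ^ 2 + b + F (y₂ x)) (Set.Ici 0) x)
    (h₁pos : ∀ x : ℝ, Real.sqrt (max b 0 / a) ≤ x → 0 ≤ y₁ x)
    (h₂pos : ∀ x : ℝ, Real.sqrt (max b 0 / a) ≤ x → 0 ≤ y₂ x) :
    ∀ x : ℝ, 0 ≤ x → y₁ x = y₂ x := by
  intro x hx
  exact le_antisymm (not_lt.1 (hF.not_lt_of_solutions h₁ h₂ h₂pos hx))
    (not_lt.1 (hF.not_lt_of_solutions h₂ h₁ h₁pos hx))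

/-- Lemma A.4 (uniqueness part): two differentiable solutions on `[0,∞)` of
`y' = −a·x² + b + F(y)` which are nonnegative on `[√(b₊/a), ∞)` coincide on `[0,∞)`. -/
theorem stmt9 (F : ℝ → ℝ) (hF : Assumption2 F) (a b : ℝ) (ha : 0 < a)
    (y₁ y₂ : ℝ → ℝ)
    (h₁ : ∀ x : ℝ, 0 ≤ x →
      HasDerivWithinAt y₁ (-a * x ^ 2 + b + F (y₁ x)) (Set.Ici 0) x)
    (h₂ : ∀ x : ℝ, 0 ≤ x →
      HasDerivWithinAt y₂ (-a * x ^ 2 + b + F (y₂ x)) (Set.Ici 0) x)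
    (h₁pos : ∀ x : ℝ, Real.sqrt (max b 0 / a) ≤ x → 0 ≤ y₁ x)
    (h₂pos : ∀ x : ℝ, Real.sqrt (max b 0 / a) ≤ x → 0 ≤ y₂ x) :
    ∀ x : ℝ, 0 ≤ x → y₁ x = y₂ x :=
  stmt9_general F hF a b y₁ y₂ h₁ h₂ h₁pos h₂pos
end

section
/- Let λ > 0, γ > 0, σ > 0 and δ ≠ 0 be constants, set l = (3λδ²/(2γσ²))^{1/3}, and define g : ℝ → ℝ by g(x) = (γσ²/(3δ²))·(x³ − 3l²·x) for |x| ≤ l and g(x) = −λ·sgn(x) for |x| > l. Then: (i) g is an odd, decreasing function; (ii) (1/2)·δ²·g''(x) = γσ²·x for every x ∈ (−l, l); (iii) g is differentiable on all of ℝ, its derivative g' is continuous on ℝ, and g'(l) = g'(−l) = 0; (iv) for every x ∈ [0, l], one has 0 ≥ g(x) ≥ g(l) = −λ. -/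
/-!
With `c = γσ²/(3δ²)` and `F t = c (t³ - 3l²t)`, the choice of `l` gives `2cl³ = λ`, i.e.
`F(±l) = ∓λ`, so `g = F ∘ p` where `p` is the clamp of `ℝ` onto `[-l, l]`. Since
`F' t = 3c(t² - l²)` vanishes at `±l` and `p` is `1`-Lipschitz, the corners of `p` are invisible
to first order: `g` is `C¹` with `g' = F' ∘ p ≤ 0`, and on `(-l, l)` it is the cubic itself.
-/

open Set Filter Topology Asymptotics

theorem HasDerivAt.comp_lipschitzWith {E : Type*} [NormedAddCommGroup E] [NormedSpace ℝ E]
    {F : ℝ → E} {p : ℝ → ℝ} {K : NNReal} {x : ℝ} (hp : LipschitzWith K p)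
    (hF : HasDerivAt F 0 (p x)) : HasDerivAt (F ∘ p) 0 x := by
  rw [hasDerivAt_iff_isLittleO] at hF ⊢
  simp only [smul_zero, sub_zero] at hF ⊢
  have hp_bigO : (fun y => p y - p x) =O[𝓝 x] fun y => y - x :=
    IsBigO.of_bound K (Eventually.of_forall fun y => by
      simpa only [← dist_eq_norm] using hp.dist_le_mul y x)
  exact (hF.comp_tendsto (hp.continuous.tendsto x)).trans_isBigO hp_bigO

section CompProjIcc

variable {E : Type*} [NormedAddCommGroup E] [NormedSpace ℝ E] {F F' : ℝ → E} {a b : ℝ}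
  (hab : a ≤ b) (hF : ∀ t ∈ Icc a b, HasDerivAt F (F' t) t) (ha : F' a = 0) (hb : F' b = 0)
include hab hF ha hb

theorem hasDerivAt_comp_projIcc (x : ℝ) :
    HasDerivAt (fun y => F (projIcc a b hab y)) (F' (projIcc a b hab x)) x := by
  by_cases hx : x ∈ Ioo a b
  · rw [projIcc_of_mem hab (Ioo_subset_Icc_self hx)]
    refine (hF x (Ioo_subset_Icc_self hx)).congr_of_eventuallyEq ?_
    filter_upwards [isOpen_Ioo.mem_nhds hx] with y hy
    rw [projIcc_of_mem hab (Ioo_subset_Icc_self hy)]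
  · have hF'x : F' (projIcc a b hab x) = 0 := by
      rcases not_and_or.1 hx with hxa | hxb
      · rw [projIcc_of_le_left hab (not_lt.1 hxa), ha]
      · rw [projIcc_of_right_le hab (not_lt.1 hxb), hb]
    rw [hF'x]
    exact HasDerivAt.comp_lipschitzWith
      ((LipschitzWith.subtype_val _).comp (LipschitzWith.projIcc hab))
      (hF'x ▸ hF _ (Subtype.mem _))

theorem deriv_comp_projIcc :
    deriv (fun y => F (projIcc a b hab y)) = fun x => F' (projIcc a b hab x) :=
  funext fun x => (hasDerivAt_comp_projIcc hab hF ha hb x).deriv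

theorem deriv_deriv_comp_projIcc_of_mem_Ioo {x : ℝ} (hx : x ∈ Ioo a b) :
    deriv (deriv fun y => F (projIcc a b hab y)) x = deriv F' x := by
  rw [deriv_comp_projIcc hab hF ha hb]
  refine EventuallyEq.deriv_eq ?_
  filter_upwards [isOpen_Ioo.mem_nhds hx] with y hy
  rw [projIcc_of_mem hab (Ioo_subset_Icc_self hy)]

end CompProjIcc

theorem ite_abs_le_eq_comp_projIcc {F : ℝ → ℝ} {l m : ℝ} (hl : 0 ≤ l) (hFl : F l = -m)
    (hFnl : F (-l) = m) (x : ℝ) :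
    (if |x| ≤ l then F x else -m * Real.sign x) = F (projIcc (-l) l (neg_le_self hl) x) := by
  split_ifs with hx
  · rw [projIcc_of_mem _ (abs_le.1 hx)]
  · rcases lt_abs.1 (not_le.1 hx) with hx | hx
    · rw [projIcc_of_right_le _ hx.le, Real.sign_of_pos (hl.trans_lt hx), hFl, mul_one]
    · rw [projIcc_of_le_left _ (by linarith), Real.sign_of_neg (by linarith), hFnl, mul_neg_one,
        neg_neg]

def cubicProfile (c l t : ℝ) : ℝ := c * (t ^ 3 - 3 * l ^ 2 * t)

theorem hasDerivAt_cubicProfile (c l t : ℝ) :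
    HasDerivAt (cubicProfile c l) (3 * c * (t ^ 2 - l ^ 2)) t :=
  (((hasDerivAt_pow 3 t).sub ((hasDerivAt_id t).const_mul (3 * l ^ 2))).const_mul c).congr_deriv
    (by norm_num; ring)

theorem cubicProfile_self (c l : ℝ) : cubicProfile c l l = -(2 * c * l ^ 3) := by
  rw [cubicProfile]; ring

theorem cubicProfile_neg_self (c l : ℝ) : cubicProfile c l (-l) = 2 * c * l ^ 3 := by
  rw [cubicProfile]; ring

section CubicProfileCompProjIcc

variable (c : ℝ) {l : ℝ} (hl : -l ≤ l)

theorem hasDerivAt_cubicProfile_comp_projIcc (x : ℝ) :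
    HasDerivAt (fun y => cubicProfile c l (projIcc (-l) l hl y))
      (3 * c * ((projIcc (-l) l hl x : ℝ) ^ 2 - l ^ 2)) x :=
  hasDerivAt_comp_projIcc hl (fun t _ => hasDerivAt_cubicProfile c l t) (by ring) (by ring) x

theorem deriv_cubicProfile_comp_projIcc :
    deriv (fun y => cubicProfile c l (projIcc (-l) l hl y)) =
      fun x => 3 * c * ((projIcc (-l) l hl x : ℝ) ^ 2 - l ^ 2) :=
  deriv_comp_projIcc hl (fun t _ => hasDerivAt_cubicProfile c l t) (by ring) (by ring)

theorem deriv_deriv_cubicProfile_comp_projIcc_of_mem_Ioo {x : ℝ} (hx : x ∈ Ioo (-l) l) :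
    deriv (deriv fun y => cubicProfile c l (projIcc (-l) l hl y)) x = 6 * c * x := by
  rw [deriv_deriv_comp_projIcc_of_mem_Ioo hl (fun t _ => hasDerivAt_cubicProfile c l t) (by ring)
    (by ring) hx]
  simp only [deriv_const_mul_field', deriv_sub_const, deriv_pow_field]
  ring

theorem antitone_cubicProfile_comp_projIcc (hc : 0 ≤ c) :
    Antitone fun y => cubicProfile c l (projIcc (-l) l hl y) := by
  refine antitone_of_deriv_nonpos
    (fun x => (hasDerivAt_cubicProfile_comp_projIcc c hl x).differentiableAt) fun x => ?_
  obtain ⟨hx₁, hx₂⟩ := (projIcc (-l) l hl x).2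
  rw [deriv_cubicProfile_comp_projIcc]
  exact mul_nonpos_of_nonneg_of_nonpos (by positivity) (sub_nonpos.2 (sq_le_sq' hx₁ hx₂))

end CubicProfileCompProjIcc

/-- Lemma 7.1: properties of the explicit function `g` associated with the equilibrium under
proportional transaction costs `λ`, where `l = (3λδ²/(2γσ²))^{1/3}`. -/
theorem stmt17 (lam γ σ δ : ℝ) (hlam : 0 < lam) (hγ : 0 < γ) (hσ : 0 < σ) (hδ : δ ≠ 0)
    (l : ℝ) (hl : l = (3 * lam * δ ^ 2 / (2 * γ * σ ^ 2)) ^ ((1 : ℝ) / 3))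
    (g : ℝ → ℝ)
    (hg : ∀ x : ℝ, g x =
      if |x| ≤ l then γ * σ ^ 2 / (3 * δ ^ 2) * (x ^ 3 - 3 * l ^ 2 * x)
      else -lam * Real.sign x) :
    -- (i) `g` is odd and decreasing
    (∀ x : ℝ, g (-x) = -g x) ∧ Antitone g ∧
    -- (ii) `(1/2)·δ²·g''(x) = γσ²·x` on `(−l, l)`
    (∀ x ∈ Set.Ioo (-l) l, 1 / 2 * δ ^ 2 * deriv (deriv g) x = γ * σ ^ 2 * x) ∧
    -- (iii) `g` is differentiable, `g'` is continuous, and `g'(±l) = 0`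
    Differentiable ℝ g ∧ Continuous (deriv g) ∧ deriv g l = 0 ∧ deriv g (-l) = 0 ∧
    -- (iv) `0 ≥ g(x) ≥ g(l) = −λ` on `[0, l]`
    (∀ x ∈ Set.Icc 0 l, g x ≤ 0 ∧ g l ≤ g x) ∧ g l = -lam := by
  set c := γ * σ ^ 2 / (3 * δ ^ 2) with hc
  have hl0 : 0 < l := hl ▸ by positivity
  have hcl : 2 * c * l ^ 3 = lam := by
    rw [hl, one_div, ← Real.rpow_natCast, ← Real.rpow_mul (by positivity)]
    norm_num [hc]
    field_simp
  have hll : -l ≤ l := neg_le_self hl0.le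
  have hgF : g = fun x => cubicProfile c l (projIcc (-l) l hll x) := funext fun x =>
    (hg x).trans (ite_abs_le_eq_comp_projIcc (F := cubicProfile c l) hl0.le
      (by rw [cubicProfile_self, hcl]) (by rw [cubicProfile_neg_self, hcl]) x)
  have hg' := hgF ▸ hasDerivAt_cubicProfile_comp_projIcc c hll
  have hderiv := hgF ▸ deriv_cubicProfile_comp_projIcc c hll
  have hanti : Antitone g := hgF ▸ antitone_cubicProfile_comp_projIcc c hll (by positivity)
  have hg0 : g 0 = 0 := by
    simp [hgF, projIcc_of_mem hll ⟨neg_nonpos.2 hl0.le, hl0.le⟩, cubicProfile]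
  have hgl : g l = -lam := by simp only [hgF, projIcc_right, cubicProfile_self, hcl]
  refine ⟨fun x => ?_, hanti, fun x hx => ?_, fun x => (hg' x).differentiableAt,
    hderiv ▸ by fun_prop, by simp [hderiv], by simp [hderiv],
    fun x hx => ⟨hg0 ▸ hanti hx.1, hanti hx.2⟩, hgl⟩
  · rw [hg x, hg (-x), abs_neg]
    split_ifs
    · ring
    · rw [Real.sign_neg]; ring
  · rw [hgF, deriv_deriv_cubicProfile_comp_projIcc_of_mem_Ioo c hll hx, hc]
    field_simp
    ring
end

section
/- Let q ∈ (1, 2], λ > 0, γ > 0, σ > 0 and δ ≠ 0, and let G(y) = λ|y|^q/q, so that (G')⁻¹(y) = sgn(y)·|y/λ|^{1/(q−1)}. Suppose g̃ : ℝ → ℝ is twice differentiable and solves the rescaled ordinary differential equation g̃''(x) + g̃'(x)·sgn(g̃(x))·|g̃(x)/q|^{1/(q−1)} = 2x for all x ∈ ℝ. Then the function g : ℝ → ℝ defined by g(x) = (λ/q)^{3/(q+2)}·(γσ²δ⁴/8)^{(q−1)/(q+2)}·g̃(2^{(q−1)/(q+2)}·(qγσ²/λ)^{1/(q+2)}·δ^{−2q/(q+2)}·x)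 is twice differentiable and solves (δ²/2)·g''(x) + g'(x)·(G')⁻¹(g(x)) = γσ²·x for all x ∈ ℝ. -/
/-!
Write `g x = A · g̃ (C x)`. Positive scaling leaves `sgn` unchanged and pulls out of
`|·|^{1/(q-1)}` as `|A y/λ|^{1/(q-1)} = (A q/λ)^{1/(q-1)} · |y/q|^{1/(q-1)}`. The constants are
chosen so that `(A q/λ)^{1/(q-1)} = δ² C/2`; then the left side of the ergodic ODE at `x` is
`δ² A C²/2` times the left side of the rescaled ODE at `C x`, that is `δ² A C³ x`, and
`δ² A C³ = γσ²`. Both identities between the constants are linear in the logarithms of the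
parameters.
-/

open Real

lemma Real.sign_mul_of_pos {a : ℝ} (ha : 0 < a) (y : ℝ) : sign (a * y) = sign y := by
  rcases lt_trichotomy y 0 with hy | rfl | hy
  · rw [sign_of_neg hy, sign_of_neg (mul_neg_of_pos_of_neg ha hy)]
  · rw [mul_zero]
  · rw [sign_of_pos hy, sign_of_pos (mul_pos ha hy)]

lemma abs_mul_div_rpow_eq {a b c : ℝ} (ha : 0 < a) (hb : 0 < b) (hc : 0 < c) (y p : ℝ) :
    |a * y / b| ^ p = (a * c / b) ^ p * |y / c| ^ p := by
  rw [← mul_rpow (by positivity) (abs_nonneg _), show a * y / b = a * c / b * (y / c) by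
    field_simp, abs_mul, abs_of_pos (by positivity : 0 < a * c / b)]

lemma deriv_const_mul_comp_mul (A C : ℝ) (f : ℝ → ℝ) :
    deriv (fun x => A * f (C * x)) = fun x => A * C * deriv f (C * x) := by
  rw [deriv_const_mul_field']
  ext x
  rw [deriv_comp_mul_left C f x, smul_eq_mul, mul_assoc]

lemma Differentiable.const_mul_comp_mul {f : ℝ → ℝ} (hf : Differentiable ℝ f) (A C : ℝ) :
    Differentiable ℝ fun x => A * f (C * x) :=
  (hf.comp (differentiable_id.const_mul C)).const_mul A

lemma ergodic_ode_of_rescaled {f : ℝ → ℝ} {q lam p d A C : ℝ} (hq : 0 < q) (hlam : 0 < lam)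
    (hA : 0 < A) (hAC : (A * q / lam) ^ p = d * C / 2)
    (hf : ∀ y, deriv (deriv f) y + deriv f y * sign (f y) * |f y / q| ^ p = 2 * y) (x : ℝ) :
    d / 2 * deriv (deriv fun x => A * f (C * x)) x
      + deriv (fun x => A * f (C * x)) x * (sign (A * f (C * x)) * |A * f (C * x) / lam| ^ p)
      = d * A * C ^ 3 * x := by
  rw [deriv_const_mul_comp_mul, deriv_const_mul_comp_mul, Real.sign_mul_of_pos hA,
    abs_mul_div_rpow_eq hA hlam hq, hAC]
  linear_combination d * A * C ^ 2 / 2 * hf (C * x)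

section RescalingConstants

-- `s` and `d` stand for `γσ²` and `δ²`.

noncomputable def rescaleAmplitude (q lam s d : ℝ) : ℝ :=
  (lam / q) ^ (3 / (q + 2)) * (s * d ^ 2 / 8) ^ ((q - 1) / (q + 2))

noncomputable def rescaleFrequency (q lam s d : ℝ) : ℝ :=
  2 ^ ((q - 1) / (q + 2)) * (q * s / lam) ^ (1 / (q + 2)) * d ^ (-(q / (q + 2)))

variable {q lam s d : ℝ}

lemma rescaleAmplitude_pos (hq : 0 < q) (hlam : 0 < lam) (hs : 0 < s) (hd : 0 < d) :
    0 < rescaleAmplitude q lam s d := by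
  unfold rescaleAmplitude; positivity

lemma rescaleFrequency_pos (hq : 0 < q) (hlam : 0 < lam) (hs : 0 < s) (hd : 0 < d) :
    0 < rescaleFrequency q lam s d := by
  unfold rescaleFrequency; positivity

lemma log_rescaleAmplitude (hq : 0 < q) (hlam : 0 < lam) (hs : 0 < s) (hd : 0 < d) :
    log (rescaleAmplitude q lam s d) = 3 / (q + 2) * (log lam - log q)
      + (q - 1) / (q + 2) * (log s + 2 * log d - 3 * log 2) := by
  have hlog8 : log 8 = 3 * log 2 := by
    rw [show (8 : ℝ) = 2 ^ 3 by norm_num, log_pow, Nat.cast_ofNat]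
  rw [rescaleAmplitude, log_mul (by positivity) (by positivity), log_rpow (by positivity),
    log_rpow (by positivity), log_div hlam.ne' hq.ne', log_div (by positivity) (by norm_num),
    log_mul hs.ne' (by positivity), log_pow, hlog8, Nat.cast_ofNat]

lemma log_rescaleFrequency (hq : 0 < q) (hlam : 0 < lam) (hs : 0 < s) (hd : 0 < d) :
    log (rescaleFrequency q lam s d) = (q - 1) / (q + 2) * log 2
      + 1 / (q + 2) * (log q + log s - log lam) - q / (q + 2) * log d := by
  rw [rescaleFrequency, log_mul (by positivity) (by positivity),
    log_mul (by positivity) (by positivity), log_rpow (by norm_num), log_rpow (by positivity),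
    log_rpow hd, log_div (by positivity) hlam.ne', log_mul hq.ne' hs.ne']
  ring

lemma mul_rescaleAmplitude_mul_rescaleFrequency_pow (hq : 0 < q) (hlam : 0 < lam) (hs : 0 < s)
    (hd : 0 < d) : d * rescaleAmplitude q lam s d * rescaleFrequency q lam s d ^ 3 = s := by
  have hA := rescaleAmplitude_pos hq hlam hs hd
  have hC := rescaleFrequency_pos hq hlam hs hd
  refine log_injOn_pos (Set.mem_Ioi.2 (by positivity)) (Set.mem_Ioi.2 hs) ?_
  rw [log_mul (by positivity) (by positivity), log_mul hd.ne' hA.ne', log_pow,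
    log_rescaleAmplitude hq hlam hs hd, log_rescaleFrequency hq hlam hs hd]
  field_simp
  ring

lemma rescaleAmplitude_mul_div_rpow (hq : 0 < q) (hq1 : q ≠ 1) (hlam : 0 < lam) (hs : 0 < s)
    (hd : 0 < d) :
    (rescaleAmplitude q lam s d * q / lam) ^ (1 / (q - 1))
      = d * rescaleFrequency q lam s d / 2 := by
  have hA := rescaleAmplitude_pos hq hlam hs hd
  have hC := rescaleFrequency_pos hq hlam hs hd
  have hq1' : q - 1 ≠ 0 := sub_ne_zero.2 hq1
  refine log_injOn_pos (Set.mem_Ioi.2 (by positivity)) (Set.mem_Ioi.2 (by positivity)) ?_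
  rw [log_rpow (by positivity), log_div (by positivity) hlam.ne', log_mul hA.ne' hq.ne',
    log_div (by positivity) two_ne_zero, log_mul hd.ne' hC.ne',
    log_rescaleAmplitude hq hlam hs hd, log_rescaleFrequency hq hlam hs hd]
  field_simp
  ring

end RescalingConstants

theorem stmt18_general (q lam γ σ δ : ℝ) (hq1 : 1 < q)
    (hlam : 0 < lam) (hγ : 0 < γ) (hσ : 0 < σ) (hδ : δ ≠ 0)
    (gq : ℝ → ℝ) (hgq : Differentiable ℝ gq) (hgq' : Differentiable ℝ (deriv gq))
    (hodeq : ∀ x : ℝ, deriv (deriv gq) x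
      + deriv gq x * Real.sign (gq x) * |gq x / q| ^ (1 / (q - 1)) = 2 * x)
    (g : ℝ → ℝ)
    (hg : ∀ x : ℝ, g x =
      (lam / q) ^ (3 / (q + 2)) * (γ * σ ^ 2 * δ ^ 4 / 8) ^ ((q - 1) / (q + 2)) *
        gq ((2 : ℝ) ^ ((q - 1) / (q + 2)) * (q * γ * σ ^ 2 / lam) ^ (1 / (q + 2)) *
          (δ ^ 2) ^ (-(q / (q + 2))) * x)) :
    Differentiable ℝ g ∧ Differentiable ℝ (deriv g) ∧
    ∀ x : ℝ, δ ^ 2 / 2 * deriv (deriv g) x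
      + deriv g x * (Real.sign (g x) * |g x / lam| ^ (1 / (q - 1))) = γ * σ ^ 2 * x := by
  have hq : 0 < q := by linarith
  have hs : 0 < γ * σ ^ 2 := by positivity
  have hd : 0 < δ ^ 2 := by positivity
  set A := rescaleAmplitude q lam (γ * σ ^ 2) (δ ^ 2)
  set C := rescaleFrequency q lam (γ * σ ^ 2) (δ ^ 2)
  obtain rfl : g = fun x => A * gq (C * x) := by
    funext x
    rw [hg x]
    simp only [A, C, rescaleAmplitude, rescaleFrequency]
    rw [← pow_mul, ← mul_assoc q]
  refine ⟨hgq.const_mul_comp_mul A C, ?_, fun x => ?_⟩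
  · rw [deriv_const_mul_comp_mul]
    exact hgq'.const_mul_comp_mul _ _
  · rw [ergodic_ode_of_rescaled hq hlam (rescaleAmplitude_pos hq hlam hs hd)
      (rescaleAmplitude_mul_div_rpow hq hq1.ne' hlam hs hd) hodeq x,
      mul_rescaleAmplitude_mul_rescaleFrequency_pow hq hlam hs hd]

/-- Rescaling for power costs `G(y) = λ|y|^q/q` with `q ∈ (1,2]`: if `g̃` solves the
rescaled ODE `g̃'' + g̃'·sgn(g̃)·|g̃/q|^{1/(q−1)} = 2x`, then the rescaled function `g`
solves the ergodic ODE `(δ²/2)·g'' + g'·(G')⁻¹(g) = γσ²·x`,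
where `(G')⁻¹(y) = sgn(y)·|y/λ|^{1/(q−1)}`. -/
theorem stmt18 (q lam γ σ δ : ℝ) (hq1 : 1 < q) (hq2 : q ≤ 2)
    (hlam : 0 < lam) (hγ : 0 < γ) (hσ : 0 < σ) (hδ : δ ≠ 0)
    (gq : ℝ → ℝ) (hgq : Differentiable ℝ gq) (hgq' : Differentiable ℝ (deriv gq))
    (hodeq : ∀ x : ℝ, deriv (deriv gq) x
      + deriv gq x * Real.sign (gq x) * |gq x / q| ^ (1 / (q - 1)) = 2 * x)
    (g : ℝ → ℝ)
    (hg : ∀ x : ℝ, g x =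
      (lam / q) ^ (3 / (q + 2)) * (γ * σ ^ 2 * δ ^ 4 / 8) ^ ((q - 1) / (q + 2)) *
        gq ((2 : ℝ) ^ ((q - 1) / (q + 2)) * (q * γ * σ ^ 2 / lam) ^ (1 / (q + 2)) *
          (δ ^ 2) ^ (-(q / (q + 2))) * x)) :
    Differentiable ℝ g ∧ Differentiable ℝ (deriv g) ∧
    ∀ x : ℝ, δ ^ 2 / 2 * deriv (deriv g) x
      + deriv g x * (Real.sign (g x) * |g x / lam| ^ (1 / (q - 1))) = γ * σ ^ 2 * x :=
  stmt18_general q lam γ σ δ hq1 hlam hγ hσ hδ gq hgq hgq' hodeq g hg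
end

section
/- Let F satisfy Assumption 2, let a > 0 and b ∈ ℝ, and set b₊ = max(b, 0). Let I ⊆ ℝ be an interval and y : I → ℝ a differentiable function with y'(x) = −a·x² + b + F(y(x)) for all x ∈ I. If there exists x₂ ∈ I with x₂ > √(b₊/a) and y(x₂) ≤ 0, then y(x) ≤ 0 for all x ∈ I with x ≥ x₂. -/
/-- Once a solution of `y' = −a·x² + b + F(y)` on an interval becomes nonpositive at some
point `x₂ > √(b₊/a)`, it stays nonpositive for all later points of the interval. -/
theorem stmt19 (F : ℝ → ℝ) (hF : Assumption2 F) (a b : ℝ) (ha : 0 < a)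
    (I : Set ℝ) (hI : I.OrdConnected) (y : ℝ → ℝ)
    (hy : ∀ x ∈ I, HasDerivWithinAt y (-a * x ^ 2 + b + F (y x)) I x)
    (x₂ : ℝ) (hx₂I : x₂ ∈ I) (hx₂ : Real.sqrt (max b 0 / a) < x₂) (hy₂ : y x₂ ≤ 0) :
    ∀ x ∈ I, x₂ ≤ x → y x ≤ 0 := by
  intro x₃ hx₃I hx₂₃
  by_contra hpos
  push_neg at hpos
  have yc : ContinuousOn y I := fun x hx => (hy x hx).continuousWithinAt
  have hIcc : Set.Icc x₂ x₃ ⊆ I := hI.out hx₂I hx₃I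
  set S : Set ℝ := {x ∈ Set.Icc x₂ x₃ | y x ≤ 0} with hSdef
  have hSne : S.Nonempty := ⟨x₂, ⟨le_refl _, hx₂₃⟩, hy₂⟩
  have hSbdd : BddAbove S := ⟨x₃, fun x hx => hx.1.2⟩
  have hSclosed : IsClosed S := by
    have hc : ContinuousOn y (Set.Icc x₂ x₃) := yc.mono hIcc
    exact hc.preimage_isClosed_of_isClosed isClosed_Icc isClosed_Iic
  set s := sSup S with hs
  have hsS : s ∈ S := hSclosed.csSup_mem hSne hSbdd
  have hsI : s ∈ I := hIcc hsS.1
  have hs2 : x₂ ≤ s := hsS.1.1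
  have hs3 : s ≤ x₃ := hsS.1.2
  have hslt : s < x₃ := lt_of_le_of_ne hs3 (by
    intro heq
    rw [heq] at hsS
    exact absurd hsS.2 (not_le.mpr hpos))
  have hIocI : Set.Ioc s x₃ ⊆ I := fun x hx => hIcc ⟨hs2.trans hx.1.le, hx.2⟩
  have hypos : ∀ x ∈ Set.Ioc s x₃, 0 < y x := by
    intro x hx
    by_contra h
    push_neg at h
    exact absurd (le_csSup hSbdd ⟨⟨hs2.trans hx.1.le, hx.2⟩, h⟩) (not_le.mpr hx.1)
  have hnb : (nhdsWithin s (Set.Ioc s x₃)).NeBot := by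
    rw [nhdsWithin_Ioc_eq_nhdsGT hslt]
    exact nhdsGT_neBot s
  have hys : y s = 0 := by
    rcases lt_or_eq_of_le hsS.2 with h | h
    · exfalso
      have hcw : ContinuousWithinAt y (Set.Ioc s x₃) s := (yc s hsI).mono hIocI
      have hev : ∀ᶠ x in nhdsWithin s (Set.Ioc s x₃), y x < 0 :=
        hcw.eventually_lt_const h
      obtain ⟨x, hxlt, hxmem⟩ := (hev.and self_mem_nhdsWithin).exists
      exact absurd (hypos x hxmem) (not_lt.mpr hxlt.le)
    · exact h
  -- derivative at s is negative
  have hd := hy s hsI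
  rw [hys, hF.map_zero] at hd
  have hs0 : 0 < s := lt_of_le_of_lt (Real.sqrt_nonneg _) (hx₂.trans_le hs2)
  have hdneg : -a * s ^ 2 + b + 0 < 0 := by
    have h1 : Real.sqrt (max b 0 / a) < s := hx₂.trans_le hs2
    have h2 : max b 0 / a < s ^ 2 := by
      have hsq : Real.sqrt (max b 0 / a) ^ 2 = max b 0 / a :=
        Real.sq_sqrt (div_nonneg (le_max_right b 0) ha.le)
      calc max b 0 / a = Real.sqrt (max b 0 / a) ^ 2 := hsq.symm
        _ < s ^ 2 := by
            exact pow_lt_pow_left₀ h1 (Real.sqrt_nonneg _) two_ne_zero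
    have h3 : max b 0 < s ^ 2 * a := (div_lt_iff₀ ha).mp h2
    have h4 : b ≤ max b 0 := le_max_left b 0
    nlinarith
  rw [hasDerivWithinAt_iff_tendsto_slope] at hd
  have hd' : Filter.Tendsto (slope y s) (nhdsWithin s (Set.Ioc s x₃))
      (nhds (-a * s ^ 2 + b + 0)) :=
    hd.mono_left (nhdsWithin_mono s (fun x hx => ⟨hIocI hx, fun hxs => hx.1.ne' hxs⟩))
  have hevneg : ∀ᶠ x in nhdsWithin s (Set.Ioc s x₃), slope y s x < 0 :=
    hd'.eventually (gt_mem_nhds hdneg)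
  obtain ⟨x, hxneg, hxmem⟩ := (hevneg.and self_mem_nhdsWithin).exists
  have hslope : 0 < slope y s x := by
    rw [slope_def_field, hys]
    exact div_pos (by simpa using hypos x hxmem) (sub_pos.mpr hxmem.1)
  exact absurd hslope (not_lt.mpr hxneg.le)
end
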